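/- There exists a constant C > 0 with the following property. Let Ω ∈ 𝓘 and let a ∈ L²(𝕋) be supported in Ω with ∫_𝕋 a dθ = 0, ‖a‖_{L²(𝕋)} ≤ |Ω|^{-1/2}, and only finitely many nonzero Haar coefficients ⟨a,h_I⟩. Let b ∈ L²(𝕋) satisfy ∫_𝕋 b dθ = 0 and have only finitely many nonzero Haar coefficients ⟨b,h_I⟩. Then the function Π₃(a,b) := Σ_{I∈𝓘} ⟨a,h_I⟩ ⟨b,h_I⟩ χ_I / |I| satisfies ‖Π₃(a,b)‖_{L¹(𝕋)} ≤ C ‖b‖_{BMO⁺_𝓘(𝕋)}. -/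

import Mathlib

open MeasureTheory Real Set ENNReal

noncomputable section

/-- `Ψ₀(t) = t / log(e+t)`. -/
def psi0 (t : ℝ) : ℝ := t / Real.log (Real.exp 1 + t)

/-- `Ψ₀` on `[0,∞]`, with `Ψ₀(∞) = ∞`. -/
def psi0E (t : ℝ≥0∞) : ℝ≥0∞ := t / ENNReal.ofReal (Real.log (Real.exp 1 + t.toReal))

/-- The length `2π·2^{-k}` of a dyadic arc of generation `k`. -/
def arcLen (k : ℕ) : ℝ := 2 * π / 2 ^ k

/-- The left endpoint `2π(2^{-k} m + δ)` of the dyadic arc `I = I^δ(k,m)`. -/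
def arcStart (δ : ℝ) (k m : ℕ) : ℝ := 2 * π * ((m : ℝ) / 2 ^ k + δ)

/-- The dyadic arc `I^δ(k,m) = [2π(2^{-k}m + δ), 2π(2^{-k}(m+1) + δ))`. -/
def arc (δ : ℝ) (k m : ℕ) : Set ℝ := Ico (arcStart δ k m) (arcStart δ k m + arcLen k)

/-- The Haar function `h_I = |I|^{-1/2}(χ_{I_-} - χ_{I_+})` of the arc `I^δ(k,m)`. -/
def haar (δ : ℝ) (k m : ℕ) : ℝ → ℝ := fun θ =>
  (arcLen k) ^ (-(1 : ℝ) / 2) *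
    ((Ico (arcStart δ k m) (arcStart δ k m + arcLen k / 2)).indicator (fun _ => (1 : ℝ)) θ -
      (Ico (arcStart δ k m + arcLen k / 2) (arcStart δ k m + arcLen k)).indicator
        (fun _ => (1 : ℝ)) θ)

/-- The fundamental domain `[2πδ, 2πδ + 2π)` of the torus, containing all arcs of `𝓘^δ`. -/
def torus (δ : ℝ) : Set ℝ := Ico (2 * π * δ) (2 * π * δ + 2 * π)

/-- The Haar coefficient `⟨f, h_I⟩ = ∫_𝕋 f h_I dθ`. -/
def haarCoeff (δ : ℝ) (k m : ℕ) (f : ℝ → ℝ) : ℝ := ∫ θ in torus δ, f θ * haar δ k m θ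

/-- The dyadic square function `S_𝓘[f] = (Σ_{I∈𝓘} |⟨f,h_I⟩|² χ_I/|I|)^{1/2}` (valued in `[0,∞]`). -/
def sqFn (δ : ℝ) (f : ℝ → ℝ) (θ : ℝ) : ℝ≥0∞ :=
  (∑' (k : ℕ) (m : Fin (2 ^ k)),
      (‖haarCoeff δ k m f‖₊ : ℝ≥0∞) ^ 2 *
        (arc δ k m).indicator (fun _ => (ENNReal.ofReal (arcLen k))⁻¹) θ) ^ (1 / 2 : ℝ)

/-- The `L^∞` norm (essential supremum of `|f|`), valued in `[0,∞]`. -/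
def einfNorm (f : ℝ → ℝ) : ℝ≥0∞ := essSup (fun θ => (‖f θ‖₊ : ℝ≥0∞)) volume

/-- The average `⟨b⟩_I = |I|⁻¹ ∫_I b` over the arc `I^δ(k,m)`. -/
def arcAvg (δ : ℝ) (k m : ℕ) (b : ℝ → ℝ) : ℝ := (arcLen k)⁻¹ * ∫ θ in arc δ k m, b θ

/-- The dyadic `BMO⁺` norm, valued in `[0,∞]`. -/
def bmoNorm (δ : ℝ) (b : ℝ → ℝ) : ℝ≥0∞ :=
  (⨆ (k : ℕ) (m : Fin (2 ^ k)),
      ((ENNReal.ofReal (arcLen k))⁻¹) ^ 2 *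
        ∫⁻ θ in arc δ k m, (‖b θ - arcAvg δ k m b‖₊ : ℝ≥0∞) ^ 2) ^ (1 / 2 : ℝ) +
    ENNReal.ofReal |∫ θ in torus δ, b θ|

/-- The pointwise product part `Π₃(a,b) = Σ_{I∈𝓘} ⟨a,h_I⟩⟨b,h_I⟩ χ_I/|I|`. -/
def Pi3 (δ : ℝ) (a b : ℝ → ℝ) : ℝ → ℝ := fun θ =>
  ∑' (k : ℕ) (m : Fin (2 ^ k)),
    haarCoeff δ k m a * haarCoeff δ k m b *
      (arc δ k m).indicator (fun _ => (arcLen k)⁻¹) θ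

/-! Since `∫ χ_I / |I| = 1`, `‖Π₃(a,b)‖₁ ≤ Σ_I |⟨a,h_I⟩| |⟨b,h_I⟩|`. Only arcs `I ⊆ Ω` contribute:
every other Haar function is constant on `Ω`, where `a` lives with mean zero. For `I ⊆ Ω` the
coefficient of `b` equals that of `g = (b - ⟨b⟩_Ω) χ_Ω`, so Cauchy–Schwarz and Bessel's inequality
for the orthonormal Haar system bound the sum by
`‖a‖₂ ‖g‖₂ ≤ |Ω|^{-1/2} · |Ω| ‖b‖_BMO ≤ √(2π) ‖b‖_BMO`. -/

theorem Orthonormal.sum_norm_inner_mul_norm_inner_le {𝕜 E ι : Type*} [RCLike 𝕜]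
    [NormedAddCommGroup E] [InnerProductSpace 𝕜 E] {v : ι → E} (hv : Orthonormal 𝕜 v)
    (x y : E) (s : Finset ι) :
    ∑ i ∈ s, ‖inner 𝕜 (v i) x‖ * ‖inner 𝕜 (v i) y‖ ≤ ‖x‖ * ‖y‖ :=
  calc ∑ i ∈ s, ‖inner 𝕜 (v i) x‖ * ‖inner 𝕜 (v i) y‖
      ≤ √(∑ i ∈ s, ‖inner 𝕜 (v i) x‖ ^ 2) * √(∑ i ∈ s, ‖inner 𝕜 (v i) y‖ ^ 2) :=
        Real.sum_mul_le_sqrt_mul_sqrt s _ _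
    _ ≤ √(‖x‖ ^ 2) * √(‖y‖ ^ 2) := by
        gcongr <;> exact hv.sum_inner_products_le _
    _ = ‖x‖ * ‖y‖ := by rw [Real.sqrt_sq (norm_nonneg x), Real.sqrt_sq (norm_nonneg y)]

theorem Orthonormal.tsum_enorm_inner_mul_enorm_inner_le {𝕜 E ι : Type*} [RCLike 𝕜]
    [NormedAddCommGroup E] [InnerProductSpace 𝕜 E] {v : ι → E} (hv : Orthonormal 𝕜 v)
    (x y : E) :
    ∑' i, ‖inner 𝕜 (v i) x‖ₑ * ‖inner 𝕜 (v i) y‖ₑ ≤ ‖x‖ₑ * ‖y‖ₑ := by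
  refine ENNReal.summable.tsum_le_of_sum_le fun s => ?_
  simp only [enorm_eq_nnnorm, ← ENNReal.coe_mul, ← ENNReal.ofNNReal_finsetSum, ENNReal.coe_le_coe,
    ← NNReal.coe_le_coe, NNReal.coe_sum, NNReal.coe_mul, coe_nnnorm]
  exact hv.sum_norm_inner_mul_norm_inner_le x y s

theorem integral_mul_eq_zero_of_eqOn {α : Type*} [MeasurableSpace α] {μ : Measure α}
    {f g : α → ℝ} {s : Set α} {c : ℝ} (hf : EqOn f (fun _ => c) s)
    (hg : Function.support g ⊆ s) (hg₀ : ∫ x, g x ∂μ = 0) : ∫ x, f x * g x ∂μ = 0 := by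
  have hfg : (fun x => f x * g x) = fun x => c * g x := by
    funext x
    by_cases hx : g x = 0
    · simp [hx]
    · rw [hf (hg hx)]
  rw [hfg, integral_const_mul, hg₀, mul_zero]

theorem inner_toLp_eq_integral {α : Type*} [MeasurableSpace α] {μ : Measure α} {f g : α → ℝ}
    (hf : MemLp f 2 μ) (hg : MemLp g 2 μ) :
    inner ℝ (hf.toLp f) (hg.toLp g) = ∫ x, f x * g x ∂μ := by
  rw [L2.inner_def]
  refine integral_congr_ae ?_
  filter_upwards [hf.coeFn_toLp, hg.coeFn_toLp] with x hfx hgx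
  rw [hfx, hgx, real_inner_eq_re_inner, RCLike.inner_apply, conj_trivial, mul_comm]
  rfl

theorem arcLen_pos (k : ℕ) : 0 < arcLen k := by
  unfold arcLen; positivity

theorem arcLen_succ (k : ℕ) : arcLen (k + 1) = arcLen k / 2 := by
  unfold arcLen; rw [pow_succ]; ring

theorem arcLen_strictAnti : StrictAnti arcLen := fun k k' h => by
  unfold arcLen; gcongr; exact one_lt_two

theorem arcLen_le_two_pi (k : ℕ) : arcLen k ≤ 2 * π :=
  div_le_self (by positivity) (one_le_pow₀ one_le_two)

theorem arcLen_rpow_neg_half_mul_self (k : ℕ) :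
    arcLen k ^ (-(1 : ℝ) / 2) * arcLen k = √(arcLen k) := by
  rw [← Real.rpow_add_one (arcLen_pos k).ne', Real.sqrt_eq_rpow]
  norm_num

theorem arcStart_succ_two_mul (δ : ℝ) (k m : ℕ) :
    arcStart δ (k + 1) (2 * m) = arcStart δ k m := by
  unfold arcStart; push_cast; rw [pow_succ]; field_simp

theorem arcStart_succ_two_mul_add_one (δ : ℝ) (k m : ℕ) :
    arcStart δ (k + 1) (2 * m + 1) = arcStart δ k m + arcLen k / 2 := by
  unfold arcStart arcLen; push_cast; rw [pow_succ]; field_simp; ring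

theorem arcStart_add_arcLen (δ : ℝ) (k m : ℕ) :
    arcStart δ k m + arcLen k = arcStart δ k (m + 1) := by
  unfold arcStart arcLen; push_cast; field_simp; ring

theorem arcStart_mono (δ : ℝ) (k : ℕ) : Monotone (arcStart δ k) := fun m m' h => by
  unfold arcStart; gcongr

theorem arc_succ_two_mul (δ : ℝ) (k m : ℕ) :
    arc δ (k + 1) (2 * m) = Ico (arcStart δ k m) (arcStart δ k m + arcLen k / 2) := by
  rw [arc, arcStart_succ_two_mul, arcLen_succ]

theorem arc_succ_two_mul_add_one (δ : ℝ) (k m : ℕ) :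
    arc δ (k + 1) (2 * m + 1) =
      Ico (arcStart δ k m + arcLen k / 2) (arcStart δ k m + arcLen k) := by
  rw [arc, arcStart_succ_two_mul_add_one, arcLen_succ, add_assoc, add_halves]

theorem arc_succ_two_mul_union (δ : ℝ) (k m : ℕ) :
    arc δ (k + 1) (2 * m) ∪ arc δ (k + 1) (2 * m + 1) = arc δ k m := by
  have := arcLen_pos k
  rw [arc_succ_two_mul, arc_succ_two_mul_add_one, arc]
  exact Ico_union_Ico_eq_Ico (by linarith) (by linarith)

theorem measurableSet_arc (δ : ℝ) (k m : ℕ) : MeasurableSet (arc δ k m) := measurableSet_Ico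

theorem volume_arc (δ : ℝ) (k m : ℕ) : volume (arc δ k m) = ENNReal.ofReal (arcLen k) := by
  rw [arc, Real.volume_Ico, add_sub_cancel_left]

theorem arc_nonempty (δ : ℝ) (k m : ℕ) : (arc δ k m).Nonempty :=
  nonempty_Ico.2 (lt_add_of_pos_right _ (arcLen_pos k))

theorem arc_disjoint_of_lt (δ : ℝ) (k : ℕ) {m m' : ℕ} (h : m < m') :
    Disjoint (arc δ k m) (arc δ k m') := by
  refine Set.disjoint_left.2 fun θ hθ hθ' => ?_
  have hθ₁ := hθ.2
  rw [arcStart_add_arcLen] at hθ₁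
  linarith [arcStart_mono δ k (Nat.succ_le_of_lt h), hθ'.1]

theorem arc_disjoint (δ : ℝ) (k : ℕ) {m m' : ℕ} (h : m ≠ m') :
    Disjoint (arc δ k m) (arc δ k m') := by
  rcases h.lt_or_gt with h | h
  · exact arc_disjoint_of_lt δ k h
  · exact (arc_disjoint_of_lt δ k h).symm

theorem arc_succ_subset (δ : ℝ) (k m : ℕ) : arc δ (k + 1) m ⊆ arc δ k (m / 2) := by
  rcases Nat.even_or_odd' m with ⟨q, rfl | rfl⟩
  · rw [show 2 * q / 2 = q by omega, ← arc_succ_two_mul_union δ k q]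
    exact subset_union_left
  · rw [show (2 * q + 1) / 2 = q by omega, ← arc_succ_two_mul_union δ k q]
    exact subset_union_right

theorem arc_add_subset (δ : ℝ) (k n m : ℕ) : arc δ (k + n) m ⊆ arc δ k (m / 2 ^ n) := by
  induction n generalizing m with
  | zero => simp
  | succ n ih =>
    calc arc δ (k + (n + 1)) m ⊆ arc δ (k + n) (m / 2) := arc_succ_subset δ (k + n) m
      _ ⊆ arc δ k (m / 2 / 2 ^ n) := ih _
      _ = arc δ k (m / 2 ^ (n + 1)) := by rw [Nat.div_div_eq_div_mul, pow_succ']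

theorem not_arc_subset_of_le (δ : ℝ) {k k' m m' : ℕ} (hk : k ≤ k') (hne : (k, m) ≠ (k', m')) :
    ¬ arc δ k m ⊆ arc δ k' m' := by
  intro hsub
  rcases hk.lt_or_eq with hk | rfl
  · have hvol := measure_mono (μ := volume) hsub
    rw [volume_arc, volume_arc, ENNReal.ofReal_le_ofReal_iff (arcLen_pos k').le] at hvol
    exact (arcLen_strictAnti hk).not_ge hvol
  · have hm : m ≠ m' := fun h => hne (h ▸ rfl)
    obtain ⟨θ, hθ⟩ := arc_nonempty δ k m
    exact (arc_disjoint δ k hm).ne_of_mem hθ (hsub hθ) rfl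

theorem arc_subset_torus {δ : ℝ} {k m : ℕ} (hm : m < 2 ^ k) : arc δ k m ⊆ torus δ := by
  have hm' : ((m : ℝ) + 1) / 2 ^ k ≤ 1 := by
    rw [div_le_one (by positivity)]
    exact_mod_cast Nat.succ_le_of_lt hm
  have hm₀ : (0 : ℝ) ≤ m / 2 ^ k := by positivity
  rintro θ ⟨h₁, h₂⟩
  rw [arcStart_add_arcLen] at h₂
  unfold arcStart at h₁ h₂
  push_cast at h₂
  constructor <;> nlinarith [pi_pos]

theorem haar_apply (δ : ℝ) (k m : ℕ) (θ : ℝ) :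
    haar δ k m θ = arcLen k ^ (-(1 : ℝ) / 2) *
      ((arc δ (k + 1) (2 * m)).indicator (fun _ => 1) θ -
        (arc δ (k + 1) (2 * m + 1)).indicator (fun _ => 1) θ) := by
  rw [arc_succ_two_mul, arc_succ_two_mul_add_one]; rfl

theorem support_haar_subset (δ : ℝ) (k m : ℕ) : Function.support (haar δ k m) ⊆ arc δ k m := by
  intro θ hθ
  by_contra h
  rw [← arc_succ_two_mul_union, mem_union, not_or] at h
  simp [haar_apply, h.1, h.2] at hθ

theorem memLp_haar {μ : Measure ℝ} [IsFiniteMeasure μ] (δ : ℝ) (k m : ℕ) (p : ℝ≥0∞) :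
    MemLp (haar δ k m) p μ := by
  have h₁ : MemLp ((arc δ (k + 1) (2 * m)).indicator fun _ => (1 : ℝ)) p μ :=
    (memLp_const 1).indicator (measurableSet_arc δ _ _)
  have h₂ : MemLp ((arc δ (k + 1) (2 * m + 1)).indicator fun _ => (1 : ℝ)) p μ :=
    (memLp_const 1).indicator (measurableSet_arc δ _ _)
  rw [show haar δ k m = _ from funext (haar_apply δ k m)]
  exact (h₁.sub h₂).const_mul _

theorem integrable_indicator_arc (δ : ℝ) (k m : ℕ) (c : ℝ) :
    Integrable ((arc δ k m).indicator fun _ => c) :=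
  (integrable_indicator_iff (measurableSet_arc δ k m)).2
    (integrableOn_const (by rw [volume_arc]; exact ENNReal.ofReal_ne_top))

theorem integral_haar (δ : ℝ) (k m : ℕ) : ∫ θ, haar δ k m θ = 0 := by
  simp_rw [haar_apply]
  rw [integral_const_mul, integral_sub (integrable_indicator_arc δ _ _ 1)
    (integrable_indicator_arc δ _ _ 1), integral_indicator_const _ (measurableSet_arc δ _ _),
    integral_indicator_const _ (measurableSet_arc δ _ _), measureReal_def, measureReal_def,
    volume_arc, volume_arc, sub_self, mul_zero]

theorem setIntegral_haar {δ : ℝ} {k m : ℕ} {s : Set ℝ} (hs : arc δ k m ⊆ s) :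
    ∫ θ in s, haar δ k m θ = 0 := by
  rw [setIntegral_eq_integral_of_forall_compl_eq_zero fun θ hθ => ?_, integral_haar]
  exact Function.notMem_support.mp fun h => hθ (hs (support_haar_subset δ k m h))

theorem haar_mul_self (δ : ℝ) (k m : ℕ) (θ : ℝ) :
    haar δ k m θ * haar δ k m θ = (arc δ k m).indicator (fun _ => (arcLen k)⁻¹) θ := by
  have hL : arcLen k ^ (-(1 : ℝ) / 2) * arcLen k ^ (-(1 : ℝ) / 2) = (arcLen k)⁻¹ := by
    rw [← Real.rpow_add (arcLen_pos k), ← Real.rpow_neg_one]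
    norm_num
  have hd : Disjoint (arc δ (k + 1) (2 * m)) (arc δ (k + 1) (2 * m + 1)) :=
    arc_disjoint δ (k + 1) (by omega)
  rw [haar_apply, ← arc_succ_two_mul_union δ k m]
  by_cases h₁ : θ ∈ arc δ (k + 1) (2 * m)
  · simp [h₁, hd.notMem_of_mem_left h₁, hL]
  · by_cases h₂ : θ ∈ arc δ (k + 1) (2 * m + 1)
    · simp [h₁, h₂, hL]
    · simp [h₁, h₂]

theorem setIntegral_haar_mul_self {δ : ℝ} {k m : ℕ} {s : Set ℝ} (hs : arc δ k m ⊆ s) :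
    ∫ θ in s, haar δ k m θ * haar δ k m θ = 1 := by
  simp_rw [haar_mul_self]
  rw [setIntegral_indicator (measurableSet_arc δ k m), inter_eq_right.2 hs, setIntegral_const,
    measureReal_def, volume_arc, ENNReal.toReal_ofReal (arcLen_pos k).le, smul_eq_mul,
    mul_inv_cancel₀ (arcLen_pos k).ne']

theorem indicator_arc_eqOn_of_le (δ : ℝ) {k K : ℕ} (m M : ℕ) (hkK : k ≤ K) :
    ∃ c : ℝ, EqOn ((arc δ k m).indicator fun _ => 1) (fun _ => c) (arc δ K M) := by
  obtain ⟨n, rfl⟩ := Nat.exists_eq_add_of_le hkK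
  have hsub := arc_add_subset δ k n M
  by_cases hq : M / 2 ^ n = m
  · exact ⟨1, fun θ hθ => indicator_of_mem (hq ▸ hsub hθ) _⟩
  · exact ⟨0, fun θ hθ =>
      indicator_of_notMem ((arc_disjoint δ k hq).notMem_of_mem_left (hsub hθ)) _⟩

theorem haar_eqOn_of_not_subset (δ : ℝ) {k m K M : ℕ} (h : ¬ arc δ k m ⊆ arc δ K M) :
    ∃ c : ℝ, EqOn (haar δ k m) (fun _ => c) (arc δ K M) := by
  rcases lt_or_ge k K with hkK | hKk
  · obtain ⟨c₁, h₁⟩ := indicator_arc_eqOn_of_le δ (2 * m) M hkK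
    obtain ⟨c₂, h₂⟩ := indicator_arc_eqOn_of_le δ (2 * m + 1) M hkK
    exact ⟨arcLen k ^ (-(1 : ℝ) / 2) * (c₁ - c₂), fun θ hθ => by
      rw [haar_apply, h₁ hθ, h₂ hθ]⟩
  · obtain ⟨n, rfl⟩ := Nat.exists_eq_add_of_le hKk
    have hq : m / 2 ^ n ≠ M := fun hq => h (hq ▸ arc_add_subset δ K n m)
    refine ⟨0, fun θ hθ => Function.notMem_support.mp fun hθ' => ?_⟩
    exact (arc_disjoint δ K hq).ne_of_mem
      (arc_add_subset δ K n m (support_haar_subset δ _ _ hθ')) hθ rfl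

instance isFiniteMeasure_restrict_torus (δ : ℝ) : IsFiniteMeasure (volume.restrict (torus δ)) :=
  isFiniteMeasure_restrict_Ico _ _

theorem integral_haar_mul_haar_of_le (δ : ℝ) {k k' m m' : ℕ} (hk : k ≤ k') (hm' : m' < 2 ^ k')
    (hne : (k, m) ≠ (k', m')) :
    ∫ θ in torus δ, haar δ k m θ * haar δ k' m' θ = 0 :=
  let ⟨_, hc⟩ := haar_eqOn_of_not_subset δ (not_arc_subset_of_le δ hk hne)
  integral_mul_eq_zero_of_eqOn hc (support_haar_subset δ k' m')
    (setIntegral_haar (arc_subset_torus hm'))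

def haarLp (δ : ℝ) (I : Σ k : ℕ, Fin (2 ^ k)) : Lp ℝ 2 (volume.restrict (torus δ)) :=
  (memLp_haar δ I.1 I.2 2).toLp

theorem orthonormal_haarLp (δ : ℝ) : Orthonormal ℝ (haarLp δ) := by
  rw [orthonormal_iff_ite]
  rintro ⟨k, m⟩ ⟨k', m'⟩
  rw [haarLp, haarLp, inner_toLp_eq_integral]
  split_ifs with h
  · cases h
    exact setIntegral_haar_mul_self (arc_subset_torus m.isLt)
  · have hne : (k, (m : ℕ)) ≠ (k', (m' : ℕ)) := fun h' => h <| by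
      obtain ⟨rfl, hm⟩ := Prod.ext_iff.mp h'
      rw [Fin.ext hm]
    rcases le_total k k' with hk | hk
    · exact integral_haar_mul_haar_of_le δ hk m'.isLt hne
    · simp_rw [mul_comm (haar δ k m _)]
      exact integral_haar_mul_haar_of_le δ hk m.isLt hne.symm

theorem haarCoeff_eq_inner {δ : ℝ} {f : ℝ → ℝ} (hf : MemLp f 2 (volume.restrict (torus δ)))
    (I : Σ k : ℕ, Fin (2 ^ k)) : haarCoeff δ I.1 I.2 f = inner ℝ (haarLp δ I) (hf.toLp f) := by
  rw [haarLp, inner_toLp_eq_integral, haarCoeff]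
  simp_rw [mul_comm (f _)]

theorem haarCoeff_eq_zero_of_not_subset {δ : ℝ} {k m K M : ℕ} {a : ℝ → ℝ}
    (ha : Function.support a ⊆ arc δ K M) (ha₀ : ∫ θ in torus δ, a θ = 0)
    (h : ¬ arc δ k m ⊆ arc δ K M) : haarCoeff δ k m a = 0 := by
  obtain ⟨c, hc⟩ := haar_eqOn_of_not_subset δ h
  rw [haarCoeff]
  simp_rw [mul_comm (a _)]
  exact integral_mul_eq_zero_of_eqOn hc ha ha₀

theorem haarCoeff_indicator_sub_const {δ : ℝ} {k m K M : ℕ} {b : ℝ → ℝ}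
    (hb : MemLp b 2 (volume.restrict (torus δ))) (hM : M < 2 ^ K)
    (h : arc δ k m ⊆ arc δ K M) (c : ℝ) :
    haarCoeff δ k m ((arc δ K M).indicator fun θ => b θ - c) = haarCoeff δ k m b := by
  have hpt : ∀ θ, (arc δ K M).indicator (fun θ => b θ - c) θ * haar δ k m θ =
      b θ * haar δ k m θ - c * haar δ k m θ := by
    intro θ
    by_cases hθ : θ ∈ arc δ K M
    · rw [indicator_of_mem hθ, sub_mul]
    · have : haar δ k m θ = 0 :=
        Function.notMem_support.mp fun h' => hθ (h (support_haar_subset δ k m h'))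
      simp [hθ, this]
  rw [haarCoeff, haarCoeff]
  simp_rw [hpt]
  have hbh : Integrable (fun θ => b θ * haar δ k m θ) (volume.restrict (torus δ)) :=
    hb.integrable_mul (memLp_haar δ k m 2)
  have hh : Integrable (fun θ => c * haar δ k m θ) (volume.restrict (torus δ)) :=
    ((memLp_haar δ k m 1).integrable le_rfl).const_mul c
  rw [integral_sub hbh hh, integral_const_mul,
    setIntegral_haar (h.trans (arc_subset_torus hM)), mul_zero, sub_zero]

theorem lintegral_enorm_mul_indicator_arc_le (δ : ℝ) (k m : ℕ) (c : ℝ) (s : Set ℝ) :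
    ∫⁻ θ in s, ‖c * (arc δ k m).indicator (fun _ => (arcLen k)⁻¹) θ‖ₑ ≤ ‖c‖ₑ := by
  have hpt : (fun θ => ‖c * (arc δ k m).indicator (fun _ => (arcLen k)⁻¹) θ‖ₑ) =
      (arc δ k m).indicator fun _ => ‖c‖ₑ * ENNReal.ofReal (arcLen k)⁻¹ := by
    funext θ
    by_cases hθ : θ ∈ arc δ k m
    · rw [indicator_of_mem hθ, indicator_of_mem hθ, enorm_mul,
        Real.enorm_of_nonneg (inv_nonneg.2 (arcLen_pos k).le)]
    · simp [hθ]
  calc ∫⁻ θ in s, ‖c * (arc δ k m).indicator (fun _ => (arcLen k)⁻¹) θ‖ₑ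
      ≤ ∫⁻ θ, ‖c * (arc δ k m).indicator (fun _ => (arcLen k)⁻¹) θ‖ₑ :=
        setLIntegral_le_lintegral _ _
    _ = ‖c‖ₑ := by
        rw [hpt, lintegral_indicator_const (measurableSet_arc δ k m), volume_arc, mul_assoc,
          ← ENNReal.ofReal_mul (inv_nonneg.2 (arcLen_pos k).le),
          inv_mul_cancel₀ (arcLen_pos k).ne', ENNReal.ofReal_one, mul_one]

theorem lintegral_enorm_Pi3_le (δ : ℝ) (a b : ℝ → ℝ) :
    ∫⁻ θ in torus δ, ‖Pi3 δ a b θ‖ₑ ≤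
      ∑' I : Σ k : ℕ, Fin (2 ^ k), ‖haarCoeff δ I.1 I.2 a‖ₑ * ‖haarCoeff δ I.1 I.2 b‖ₑ := by
  have hmeas : ∀ (k : ℕ) (m : Fin (2 ^ k)), Measurable fun θ =>
      ‖haarCoeff δ k m a * haarCoeff δ k m b * (arc δ k m).indicator (fun _ => (arcLen k)⁻¹) θ‖ₑ :=
    fun k m => ((measurable_const.indicator (measurableSet_arc δ k m)).const_mul _).enorm
  calc ∫⁻ θ in torus δ, ‖Pi3 δ a b θ‖ₑ
      ≤ ∫⁻ θ in torus δ, ∑' (k : ℕ) (m : Fin (2 ^ k)),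
          ‖haarCoeff δ k m a * haarCoeff δ k m b *
            (arc δ k m).indicator (fun _ => (arcLen k)⁻¹) θ‖ₑ :=
        lintegral_mono fun θ => enorm_tsum_le_tsum_enorm.trans
          (ENNReal.tsum_le_tsum fun k => enorm_tsum_le_tsum_enorm)
    _ = ∑' (k : ℕ) (m : Fin (2 ^ k)), ∫⁻ θ in torus δ,
          ‖haarCoeff δ k m a * haarCoeff δ k m b *
            (arc δ k m).indicator (fun _ => (arcLen k)⁻¹) θ‖ₑ := by
        rw [lintegral_tsum fun k => (Measurable.tsum (hmeas k)).aemeasurable]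
        exact tsum_congr fun k => lintegral_tsum fun m => (hmeas k m).aemeasurable
    _ ≤ ∑' (k : ℕ) (m : Fin (2 ^ k)), ‖haarCoeff δ k m a‖ₑ * ‖haarCoeff δ k m b‖ₑ :=
        ENNReal.tsum_le_tsum fun k => ENNReal.tsum_le_tsum fun m =>
          (lintegral_enorm_mul_indicator_arc_le δ k m _ _).trans_eq (enorm_mul _ _)
    _ = _ := (ENNReal.tsum_sigma fun k (m : Fin (2 ^ k)) =>
          ‖haarCoeff δ k m a‖ₑ * ‖haarCoeff δ k m b‖ₑ).symm

theorem lintegral_sq_sub_arcAvg_le (δ : ℝ) {K M : ℕ} (hM : M < 2 ^ K) (b : ℝ → ℝ) :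
    ∫⁻ θ in arc δ K M, ‖b θ - arcAvg δ K M b‖ₑ ^ 2 ≤
      ENNReal.ofReal (arcLen K) ^ 2 * bmoNorm δ b ^ 2 := by
  have hT : (⨆ (k : ℕ) (m : Fin (2 ^ k)), ((ENNReal.ofReal (arcLen k))⁻¹) ^ 2 *
      ∫⁻ θ in arc δ k m, (‖b θ - arcAvg δ k m b‖₊ : ℝ≥0∞) ^ 2) ≤ bmoNorm δ b ^ 2 := by
    rw [← ENNReal.rpow_two, ← ENNReal.rpow_inv_le_iff two_pos, ← one_div, bmoNorm]
    exact le_self_add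
  have hL : ENNReal.ofReal (arcLen K) ^ 2 ≠ 0 :=
    pow_ne_zero 2 (ENNReal.ofReal_pos.2 (arcLen_pos K)).ne'
  rw [← ENNReal.inv_mul_le_iff hL (ENNReal.pow_ne_top ENNReal.ofReal_ne_top), ENNReal.inv_pow]
  refine le_trans ?_ hT
  simp only [enorm_eq_nnnorm]
  exact le_iSup₂_of_le K ⟨M, hM⟩ le_rfl

theorem eLpNorm_indicator_sub_arcAvg_le (δ : ℝ) {K M : ℕ} (hM : M < 2 ^ K) (b : ℝ → ℝ) :
    eLpNorm ((arc δ K M).indicator fun θ => b θ - arcAvg δ K M b) 2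
        (volume.restrict (torus δ)) ≤ ENNReal.ofReal (arcLen K) * bmoNorm δ b := by
  rw [eLpNorm_indicator_eq_eLpNorm_restrict (measurableSet_arc δ K M),
    Measure.restrict_restrict (measurableSet_arc δ K M), inter_eq_left.2 (arc_subset_torus hM),
    eLpNorm_eq_lintegral_rpow_enorm_toReal two_ne_zero ENNReal.ofNat_ne_top, ENNReal.toReal_ofNat,
    one_div, ENNReal.rpow_inv_le_iff two_pos]
  simp only [ENNReal.rpow_two, mul_pow]
  exact lintegral_sq_sub_arcAvg_le δ hM b

/-- The diagonal paraproduct `Π₃` maps (dyadic atom, dyadic `BMO⁺`) boundedly into `L¹(𝕋)`. -/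
theorem stmt12 :
    ∃ C > (0 : ℝ), ∀ (δ : ℝ), 0 ≤ δ → δ < 1 →
      ∀ (K M : ℕ), M < 2 ^ K → ∀ a b : ℝ → ℝ,
      Measurable a → MemLp a 2 (volume.restrict (torus δ)) →
      Function.support a ⊆ arc δ K M →
      (∫ θ in torus δ, a θ) = 0 →
      eLpNorm a 2 (volume.restrict (torus δ)) ≤ ENNReal.ofReal ((arcLen K) ^ (-(1 : ℝ) / 2)) →
      {p : ℕ × ℕ | p.2 < 2 ^ p.1 ∧ haarCoeff δ p.1 p.2 a ≠ 0}.Finite →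
      Measurable b → MemLp b 2 (volume.restrict (torus δ)) →
      (∫ θ in torus δ, b θ) = 0 →
      {p : ℕ × ℕ | p.2 < 2 ^ p.1 ∧ haarCoeff δ p.1 p.2 b ≠ 0}.Finite →
      (∫⁻ θ in torus δ, (‖Pi3 δ a b θ‖₊ : ℝ≥0∞)) ≤ ENNReal.ofReal C * bmoNorm δ b := by
  refine ⟨√(2 * π), by positivity, ?_⟩
  intro δ _ _ K M hM a b _ ha ha_supp ha_mean ha_norm _ _ hb _ _
  set g := (arc δ K M).indicator fun θ => b θ - arcAvg δ K M b
  have hg : MemLp g 2 (volume.restrict (torus δ)) :=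
    (hb.sub (memLp_const _)).indicator (measurableSet_arc δ K M)
  have hab : ∀ I : Σ k : ℕ, Fin (2 ^ k), ‖haarCoeff δ I.1 I.2 a‖ₑ * ‖haarCoeff δ I.1 I.2 b‖ₑ =
      ‖haarCoeff δ I.1 I.2 a‖ₑ * ‖haarCoeff δ I.1 I.2 g‖ₑ := fun I => by
    by_cases h : arc δ I.1 I.2 ⊆ arc δ K M
    · rw [haarCoeff_indicator_sub_const hb hM h]
    · rw [haarCoeff_eq_zero_of_not_subset ha_supp ha_mean h, enorm_zero, zero_mul, zero_mul]
  simp only [← enorm_eq_nnnorm]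
  calc ∫⁻ θ in torus δ, ‖Pi3 δ a b θ‖ₑ
      ≤ ∑' I : Σ k : ℕ, Fin (2 ^ k), ‖haarCoeff δ I.1 I.2 a‖ₑ * ‖haarCoeff δ I.1 I.2 b‖ₑ :=
        lintegral_enorm_Pi3_le δ a b
    _ = ∑' I, ‖inner ℝ (haarLp δ I) (ha.toLp a)‖ₑ * ‖inner ℝ (haarLp δ I) (hg.toLp g)‖ₑ := by
        refine tsum_congr fun I => ?_
        rw [hab, haarCoeff_eq_inner ha, haarCoeff_eq_inner hg]
    _ ≤ ‖ha.toLp a‖ₑ * ‖hg.toLp g‖ₑ :=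
        (orthonormal_haarLp δ).tsum_enorm_inner_mul_enorm_inner_le _ _
    _ ≤ ENNReal.ofReal (arcLen K ^ (-(1 : ℝ) / 2)) *
          (ENNReal.ofReal (arcLen K) * bmoNorm δ b) := by
        rw [Lp.enorm_toLp, Lp.enorm_toLp]
        exact mul_le_mul' ha_norm (eLpNorm_indicator_sub_arcAvg_le δ hM b)
    _ ≤ ENNReal.ofReal √(2 * π) * bmoNorm δ b := by
        rw [← mul_assoc, ← ENNReal.ofReal_mul (Real.rpow_nonneg (arcLen_pos K).le _),
          arcLen_rpow_neg_half_mul_self]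
        gcongr
        exact arcLen_le_two_pi K
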